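/- Let G be a second countable, locally compact, Hausdorff étale groupoid with unit space X = G^0 acting properly on a second countable, locally compact, Hausdorff space Z with moment map ρ: Z → X. Then for each z ∈ Z there exist open neighborhoods U^ρ of z in Z and U of ρ(z) in X such that: (i) the isotropy group G^z_z (which is finite) acts on U; (ii) the restricted groupoid G|_U contains an open subgroupoid isomorphic to the transformation groupoid U ⋊ G^z_z; and (iii) the G-action restricted to U^ρ is induced from U ⋊ G^z_z, i.e. the restriction of the action groupoid satisfies (G ⋉ Z)|_{U^ρ} = U^ρ ⋊ (U ⋊ G^z_z). -/

import Mathlib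

universe u v w

/-- A locally compact topological groupoid, described by its space `Arr` of
arrows.  The unit space `G⁰` is the set of fixed points of the source map
`src`; the multiplication `mul g h` is only required to be meaningful on
composable pairs, i.e. when `src g = rng h`. -/
structure GroupoidStructure (Arr : Type u) [TopologicalSpace Arr] where
  /-- source map -/
  src : Arr → Arr
  /-- range map -/
  rng : Arr → Arr
  /-- partial multiplication (only meaningful when `src g = rng h`) -/
  mul : Arr → Arr → Arr
  /-- inversion -/
  inv : Arr → Arr
  src_src : ∀ g, src (src g) = src g
  rng_src : ∀ g, rng (src g) = src g
  src_rng : ∀ g, src (rng g) = rng g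
  rng_rng : ∀ g, rng (rng g) = rng g
  src_mul : ∀ g h, src g = rng h → src (mul g h) = src h
  rng_mul : ∀ g h, src g = rng h → rng (mul g h) = rng g
  mul_assoc : ∀ g h k, src g = rng h → src h = rng k →
    mul (mul g h) k = mul g (mul h k)
  mul_src : ∀ g, mul g (src g) = g
  rng_mul_self : ∀ g, mul (rng g) g = g
  src_inv : ∀ g, src (inv g) = rng g
  rng_inv : ∀ g, rng (inv g) = src g
  mul_inv_self : ∀ g, mul g (inv g) = rng g
  inv_mul_self : ∀ g, mul (inv g) g = src g
  continuous_src : Continuous src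
  continuous_rng : Continuous rng
  continuous_inv : Continuous inv
  continuous_mul : Continuous fun p : {p : Arr × Arr // src p.1 = rng p.2} =>
    mul p.val.1 p.val.2

namespace GroupoidStructure

variable {Arr : Type u} [TopologicalSpace Arr] (G : GroupoidStructure Arr)

/-- The unit space `G⁰` of the groupoid. -/
def unitSpace : Set Arr := {x | G.src x = x}

/-- A groupoid is étale when its source map is a local homeomorphism onto the
unit space. -/
def IsEtale : Prop :=
  IsLocalHomeomorph fun g : Arr => (⟨G.src g, G.src_src g⟩ : G.unitSpace)

/-- A groupoid is proper when its anchor map `(r, s) : G → G⁰ × G⁰` is a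
proper map. -/
def IsProper : Prop :=
  IsProperMap fun g : Arr =>
    ((⟨G.rng g, G.src_rng g⟩ : G.unitSpace), (⟨G.src g, G.src_src g⟩ : G.unitSpace))

end GroupoidStructure
namespace GroupoidStructure

variable {Arr : Type u} [TopologicalSpace Arr] (G : GroupoidStructure Arr)

/-- A continuous action of the groupoid `G` on a topological space `Z`, with
moment map `ρ : Z → G⁰`.  The action `act g z` is only meaningful when
`src g = ρ z`. -/
structure Action (Z : Type v) [TopologicalSpace Z] where
  /-- the moment map, taking values in the unit space -/
  ρ : Z → Arr
  ρ_unit : ∀ z, G.src (ρ z) = ρ z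
  /-- the action map (only meaningful when `src g = ρ z`) -/
  act : Arr → Z → Z
  ρ_act : ∀ g z, G.src g = ρ z → ρ (act g z) = G.rng g
  act_unit : ∀ z, act (ρ z) z = z
  act_mul : ∀ g h z, G.src h = ρ z → G.src g = G.rng h →
    act (G.mul g h) z = act g (act h z)
  continuous_ρ : Continuous ρ
  continuous_act : Continuous fun p : {p : Arr × Z // G.src p.1 = ρ p.2} =>
    act p.val.1 p.val.2

variable {G}
variable {Z : Type v} [TopologicalSpace Z]

/-- The action is proper when the anchor map `(g, z) ↦ (g ⬝ z, z)` of the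
action groupoid `Z ⋊ G` is a proper map. -/
def Action.IsProper (α : G.Action Z) : Prop :=
  IsProperMap fun p : {p : Arr × Z // G.src p.1 = α.ρ p.2} =>
    (α.act p.val.1 p.val.2, p.val.2)

/-- The isotropy group `G^z_z` of a point `z`: the arrows with source and
range `ρ z` fixing `z`. -/
def Action.isotropy (α : G.Action Z) (z : Z) : Set Arr :=
  {g | G.src g = α.ρ z ∧ G.rng g = α.ρ z ∧ α.act g z = z}

end GroupoidStructure


namespace GroupoidStructure

variable {Arr : Type u} [TopologicalSpace Arr] (G : GroupoidStructure Arr)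

lemma rng_unit {u : Arr} (h : G.src u = u) : G.rng u = u := by
  conv_lhs => rw [← h]
  rw [G.rng_src, h]

lemma inv_inv (g : Arr) : G.inv (G.inv g) = g := by
  have h1 : G.mul (G.inv g) (G.inv (G.inv g)) = G.src g := by
    rw [G.mul_inv_self, G.rng_inv]
  calc G.inv (G.inv g)
      = G.mul (G.rng (G.inv (G.inv g))) (G.inv (G.inv g)) := (G.rng_mul_self _).symm
    _ = G.mul (G.mul g (G.inv g)) (G.inv (G.inv g)) := by
        rw [G.rng_inv, G.src_inv, G.mul_inv_self]
    _ = G.mul g (G.mul (G.inv g) (G.inv (G.inv g))) :=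
        G.mul_assoc _ _ _ (G.rng_inv g).symm (by rw [G.src_inv, G.rng_inv, G.src_inv])
    _ = g := by rw [h1, G.mul_src]

lemma inv_unit {u : Arr} (h : G.src u = u) : G.inv u = u := by
  have h1 : G.inv u = G.mul (G.inv u) u := by
    conv_lhs => rw [← G.mul_src (G.inv u)]
    rw [G.src_inv, G.rng_unit h]
  rw [h1, G.inv_mul_self, h]

lemma inv_mul_rev {γ δ : Arr} (hc : G.src γ = G.rng δ) :
    G.inv (G.mul γ δ) = G.mul (G.inv δ) (G.inv γ) := by
  set m := G.mul γ δ with hm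
  have hsm : G.src m = G.src δ := G.src_mul _ _ hc
  have hrm : G.rng m = G.rng γ := G.rng_mul _ _ hc
  have hc2 : G.src (G.inv δ) = G.rng (G.inv γ) := by rw [G.src_inv, G.rng_inv, hc]
  have hk : G.rng (G.mul (G.inv δ) (G.inv γ)) = G.src δ := by
    rw [G.rng_mul _ _ hc2, G.rng_inv]
  have hA : G.mul m (G.mul (G.inv δ) (G.inv γ)) = G.rng m := by
    have h1 : G.mul m (G.mul (G.inv δ) (G.inv γ)) = G.mul (G.mul m (G.inv δ)) (G.inv γ) := by
      refine (G.mul_assoc _ _ _ ?_ hc2).symm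
      rw [hsm, G.rng_inv]
    have h2 : G.mul m (G.inv δ) = γ := by
      rw [hm, G.mul_assoc _ _ _ hc (by rw [G.rng_inv]), G.mul_inv_self, ← hc, G.mul_src]
    rw [h1, h2, G.mul_inv_self, hrm]
  calc G.inv m
      = G.mul (G.inv m) (G.rng m) := by
        conv_lhs => rw [← G.mul_src (G.inv m)]
        rw [G.src_inv]
    _ = G.mul (G.inv m) (G.mul m (G.mul (G.inv δ) (G.inv γ))) := by rw [hA]
    _ = G.mul (G.mul (G.inv m) m) (G.mul (G.inv δ) (G.inv γ)) := by
        refine (G.mul_assoc _ _ _ (G.src_inv m) ?_).symm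
        rw [hsm, hk]
    _ = G.mul (G.inv δ) (G.inv γ) := by
        rw [G.inv_mul_self, hsm, ← hk, G.rng_mul_self]

end GroupoidStructure

namespace GroupoidStructure

variable {Arr : Type u} [TopologicalSpace Arr] {G : GroupoidStructure Arr}
  {Z : Type v} [TopologicalSpace Z] (α : G.Action Z) (z : Z)

lemma Action.unit_mem_isotropy : α.ρ z ∈ α.isotropy z :=
  ⟨α.ρ_unit z, G.rng_unit (α.ρ_unit z), α.act_unit z⟩

lemma Action.inv_mem_isotropy {γ : Arr} (h : γ ∈ α.isotropy z) :
    G.inv γ ∈ α.isotropy z := by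
  obtain ⟨h1, h2, h3⟩ := h
  refine ⟨by rw [G.src_inv, h2], by rw [G.rng_inv, h1], ?_⟩
  have key := α.act_mul (G.inv γ) γ z h1 (by rw [G.src_inv])
  rw [G.inv_mul_self, h1, α.act_unit, h3] at key
  exact key.symm

lemma Action.mul_mem_isotropy {γ δ : Arr} (hγ : γ ∈ α.isotropy z)
    (hδ : δ ∈ α.isotropy z) : G.mul γ δ ∈ α.isotropy z := by
  have hc : G.src γ = G.rng δ := by rw [hγ.1, hδ.2.1]
  exact ⟨by rw [G.src_mul _ _ hc, hδ.1], by rw [G.rng_mul _ _ hc, hγ.2.1],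
    by rw [α.act_mul _ _ _ hδ.1 hc, hδ.2.2, hγ.2.2]⟩

end GroupoidStructure

open GroupoidStructure

set_option maxHeartbeats 1600000 in
/-- **Slice theorem for proper actions of étale groupoids**
(Proposition `prop:prodr`).  Let `G` be a second countable, locally compact,
Hausdorff étale groupoid with unit space `X = G⁰`, acting properly on a
second countable, locally compact, Hausdorff space `Z` with moment map `ρ`.
Then for every `z ∈ Z` there are open neighbourhoods `Uρ ∋ z` in `Z` and
`U ∋ ρ z` (relatively open in `X`) such that:
the isotropy group `G^z_z` is finite and acts on `U` (via `a`); the map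
`ψ : U ⋊ G^z_z → G` is an isomorphism onto an open subgroupoid of `G|_U`
(an open embedding which is a groupoid homomorphism); and the `G`-action
restricted to `Uρ` is induced from `U ⋊ G^z_z`, i.e. every arrow of the
restricted action groupoid `(G ⋉ Z)|_{Uρ}` comes from `U ⋊ G^z_z`, so that
`(G ⋉ Z)|_{Uρ} = Uρ ⋊ (U ⋊ G^z_z)`. -/
theorem slice_theorem_for_proper_actions
    {Arr : Type u} [TopologicalSpace Arr] [SecondCountableTopology Arr]
    [LocallyCompactSpace Arr] [T2Space Arr]
    (G : GroupoidStructure Arr) (hEtale : G.IsEtale)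
    {Z : Type v} [TopologicalSpace Z] [SecondCountableTopology Z]
    [LocallyCompactSpace Z] [T2Space Z]
    (α : G.Action Z) (hProper : α.IsProper) (z : Z) :
    ∃ (Uρ : Set Z) (U : Set Arr) (a : Arr → Arr → Arr) (ψ : Arr → Arr → Arr),
      -- `Uρ` is an open neighbourhood of `z` in `Z`
      IsOpen Uρ ∧ z ∈ Uρ ∧
      -- `U` is an open neighbourhood of `ρ z` in the unit space `X = G⁰`
      U ⊆ G.unitSpace ∧ (∃ V : Set Arr, IsOpen V ∧ U = V ∩ G.unitSpace) ∧
      α.ρ z ∈ U ∧ α.ρ '' Uρ ⊆ U ∧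
      -- the isotropy group `G^z_z` is finite
      (α.isotropy z).Finite ∧
      -- (i) the isotropy group `G^z_z` acts (continuously) on `U` via `a`
      (∀ γ ∈ α.isotropy z, ∀ u ∈ U, a γ u ∈ U) ∧
      (∀ u ∈ U, a (α.ρ z) u = u) ∧
      (∀ γ δ, γ ∈ α.isotropy z → δ ∈ α.isotropy z → ∀ u ∈ U,
        a (G.mul γ δ) u = a γ (a δ u)) ∧
      Continuous (fun p : ↥(α.isotropy z) × ↥U => a p.1.val p.2.val) ∧
      -- (ii) `ψ` embeds the transformation groupoid `U ⋊ G^z_z` as an open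
      -- subgroupoid of `G|_U`
      Topology.IsOpenEmbedding
        (fun p : ↥U × ↥(α.isotropy z) => ψ p.1.val p.2.val) ∧
      (∀ u ∈ U, ∀ γ ∈ α.isotropy z, G.rng (ψ u γ) = u) ∧
      (∀ u ∈ U, ∀ γ ∈ α.isotropy z, G.src (ψ u γ) = a (G.inv γ) u) ∧
      (∀ u ∈ U, ψ u (α.ρ z) = u) ∧
      (∀ u ∈ U, ∀ γ δ, γ ∈ α.isotropy z → δ ∈ α.isotropy z →
        G.mul (ψ u γ) (ψ (a (G.inv γ) u) δ) = ψ u (G.mul γ δ)) ∧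
      -- (iii) the `G`-action restricted to `Uρ` is induced from `U ⋊ G^z_z`:
      -- `(G ⋉ Z)|_{Uρ} = Uρ ⋊ (U ⋊ G^z_z)`
      (∀ g z', G.src g = α.ρ z' → z' ∈ Uρ → α.act g z' ∈ Uρ →
        ∃ u γ, u ∈ U ∧ γ ∈ α.isotropy z ∧ g = ψ u γ) := by
  classical
  have hxU : α.ρ z ∈ G.unitSpace := α.ρ_unit z
  have hxS : α.ρ z ∈ α.isotropy z := α.unit_mem_isotropy z
  -- the range map, as a local homeomorphism onto the unit space
  have hrM : IsLocalHomeomorph (fun g : Arr => (⟨G.rng g, G.src_rng g⟩ : G.unitSpace)) := by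
    have hinv : IsLocalHomeomorph G.inv :=
      (Homeomorph.mk ⟨G.inv, G.inv, G.inv_inv, G.inv_inv⟩ G.continuous_inv
        G.continuous_inv).isLocalHomeomorph
    have heq : (fun g : Arr => (⟨G.rng g, G.src_rng g⟩ : G.unitSpace)) =
        (fun g : Arr => (⟨G.src g, G.src_src g⟩ : G.unitSpace)) ∘ G.inv := by
      funext g; exact Subtype.ext (G.src_inv g).symm
    rw [heq]
    exact hEtale.comp hinv
  -- finiteness of the isotropy group
  have hSfin : (α.isotropy z).Finite := by
    have hK : IsCompact ((fun p : {p : Arr × Z // G.src p.1 = α.ρ p.2} =>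
        (α.act p.val.1 p.val.2, p.val.2)) ⁻¹' {(z, z)}) :=
      hProper.isCompact_preimage isCompact_singleton
    have hK1 : IsCompact ((fun p : {p : Arr × Z // G.src p.1 = α.ρ p.2} => p.val.1) ''
        ((fun p : {p : Arr × Z // G.src p.1 = α.ρ p.2} =>
          (α.act p.val.1 p.val.2, p.val.2)) ⁻¹' {(z, z)})) :=
      hK.image (continuous_fst.comp continuous_subtype_val)
    choose es hes hesf using hEtale
    obtain ⟨t, -, hcov⟩ := hK1.elim_nhds_subcover (fun g => (es g).source)
      (fun g _ => (es g).open_source.mem_nhds (hes g))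
    have hsing : ∀ g : Arr, (α.isotropy z ∩ (es g).source).Subsingleton := by
      intro g a ha b hb
      have h1 : (fun g : Arr => (⟨G.src g, G.src_src g⟩ : G.unitSpace)) a =
          (fun g : Arr => (⟨G.src g, G.src_src g⟩ : G.unitSpace)) b :=
        Subtype.ext (by simp only; rw [ha.1.1, hb.1.1])
      rw [hesf g] at h1
      exact (es g).injOn ha.2 hb.2 h1
    refine Set.Finite.subset (Set.Finite.biUnion t.finite_toSet
      (fun g _ => (hsing g).finite)) ?_
    intro γ hγ
    have hmem : γ ∈ (fun p : {p : Arr × Z // G.src p.1 = α.ρ p.2} => p.val.1) ''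
        ((fun p : {p : Arr × Z // G.src p.1 = α.ρ p.2} =>
          (α.act p.val.1 p.val.2, p.val.2)) ⁻¹' {(z, z)}) := by
      refine ⟨⟨(γ, z), hγ.1⟩, ?_, rfl⟩
      simp only [Set.mem_preimage, Set.mem_singleton_iff, Prod.mk.injEq]
      exact ⟨hγ.2.2, trivial⟩
    obtain ⟨g, hgt, hgmem⟩ := Set.mem_iUnion₂.mp (hcov hmem)
    exact Set.mem_biUnion hgt ⟨hγ, hgmem⟩
  haveI hSfinite : Finite (α.isotropy z) := hSfin.to_subtype
  -- pairwise disjoint neighbourhoods of the isotropy elements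
  have sep : ∀ γ δ : Arr, ∃ A B : Set Arr, IsOpen A ∧ IsOpen B ∧
      (γ ≠ δ → γ ∈ A ∧ δ ∈ B ∧ Disjoint A B) := by
    intro γ δ
    by_cases h : γ = δ
    · exact ⟨Set.univ, Set.univ, isOpen_univ, isOpen_univ, fun hn => absurd h hn⟩
    · obtain ⟨A, B, hA, hB, hγA, hδB, hAB⟩ := t2_separation h
      exact ⟨A, B, hA, hB, fun _ => ⟨hγA, hδB, hAB⟩⟩
  choose Asep Bsep hAopen hBopen hABsep using sep
  set N : Arr → Set Arr := fun γ => ⋂ δ ∈ α.isotropy z \ {γ}, (Asep γ δ ∩ Bsep δ γ)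
    with hNdef
  have hNopen : ∀ γ, IsOpen (N γ) :=
    fun γ => Set.Finite.isOpen_biInter hSfin.diff
      (fun δ _ => (hAopen γ δ).inter (hBopen δ γ))
  have hNmem : ∀ γ, γ ∈ N γ := by
    intro γ
    refine Set.mem_biInter fun δ hδ => ?_
    have hne : γ ≠ δ := fun h => hδ.2 (by rw [h]; rfl)
    exact ⟨(hABsep γ δ hne).1, (hABsep δ γ hne.symm).2.1⟩
  have hNdisj : ∀ γ ∈ α.isotropy z, ∀ δ ∈ α.isotropy z, γ ≠ δ →
      Disjoint (N γ) (N δ) := by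
    intro γ hγ δ hδ hne
    have h1 : N γ ⊆ Asep γ δ :=
      (Set.biInter_subset_of_mem (show δ ∈ α.isotropy z \ {γ} from
        ⟨hδ, fun h => hne (by simpa using h.symm)⟩)).trans Set.inter_subset_left
    have h2 : N δ ⊆ Bsep γ δ :=
      (Set.biInter_subset_of_mem (show γ ∈ α.isotropy z \ {δ} from
        ⟨hγ, fun h => hne (by simpa using h)⟩)).trans Set.inter_subset_right
    exact ((hABsep γ δ hne).2.2).mono h1 h2
  -- bisections through isotropy elements
  choose E hEmem hEeq using hrM
  set E' : Arr → OpenPartialHomeomorph Arr G.unitSpace :=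
    fun γ => (E γ).restrOpen (N γ) (hNopen γ) with hE'def
  set W : Arr → Set Arr := fun γ => (E' γ).source with hWdef
  have hWopen : ∀ γ, IsOpen (W γ) := fun γ => (E' γ).open_source
  have hWsrc : ∀ γ, W γ = (E γ).source ∩ N γ := fun γ =>
    OpenPartialHomeomorph.restrOpen_source _ _ _
  have hWmem : ∀ γ, γ ∈ W γ := fun γ => (hWsrc γ) ▸ ⟨hEmem γ, hNmem γ⟩
  have hWN : ∀ γ, W γ ⊆ N γ := fun γ => (hWsrc γ) ▸ Set.inter_subset_right
  have hE'eq : ∀ γ, ⇑(E' γ) = (fun g : Arr => (⟨G.rng g, G.src_rng g⟩ : G.unitSpace)) :=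
    fun γ => (hEeq γ).symm
  have hWdisj : ∀ γ ∈ α.isotropy z, ∀ δ ∈ α.isotropy z, γ ≠ δ →
      Disjoint (W γ) (W δ) :=
    fun γ hγ δ hδ hne => ((hNdisj γ hγ δ hδ hne).mono (hWN γ) (hWN δ))
  have hWrng : ∀ γ w, w ∈ W γ →
      (⟨G.rng w, G.src_rng w⟩ : G.unitSpace) ∈ (E' γ).target ∧
      (E' γ).symm ⟨G.rng w, G.src_rng w⟩ = w := by
    intro γ w hw
    have h1 := (E' γ).map_source hw
    have h2 := (E' γ).left_inv hw
    rw [hE'eq γ] at h1 h2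
    exact ⟨h1, h2⟩
  -- the map `ψ`
  set ψ : Arr → Arr → Arr := fun u γ =>
    if hγ : γ ∈ α.isotropy z then
      if hu : u ∈ G.unitSpace then
        if ht : (⟨u, hu⟩ : G.unitSpace) ∈ (E' γ).target then (E' γ).symm ⟨u, hu⟩ else u
      else u
    else u with hψdef
  have hψ_eq : ∀ {γ} (hγ : γ ∈ α.isotropy z) {u} (hu : u ∈ G.unitSpace)
      (ht : (⟨u, hu⟩ : G.unitSpace) ∈ (E' γ).target),
      ψ u γ = (E' γ).symm ⟨u, hu⟩ := by
    intro γ hγ u hu ht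
    simp only [hψdef]
    rw [dif_pos hγ, dif_pos hu, dif_pos ht]
  have hψ_uniq : ∀ {γ}, γ ∈ α.isotropy z → ∀ {w}, w ∈ W γ → ψ (G.rng w) γ = w := by
    intro γ hγ w hw
    rw [hψ_eq hγ (G.src_rng w) (hWrng γ w hw).1]
    exact (hWrng γ w hw).2
  have hψ_mem : ∀ {γ}, γ ∈ α.isotropy z → ∀ {u} (hu : u ∈ G.unitSpace),
      (⟨u, hu⟩ : G.unitSpace) ∈ (E' γ).target →
      ψ u γ ∈ W γ ∧ G.rng (ψ u γ) = u := by
    intro γ hγ u hu ht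
    rw [hψ_eq hγ hu ht]
    refine ⟨(E' γ).map_target ht, ?_⟩
    have h2 := (E' γ).right_inv ht
    rw [hE'eq γ] at h2
    exact congrArg Subtype.val h2
  have hψx : ∀ {γ}, γ ∈ α.isotropy z → ψ (α.ρ z) γ = γ := by
    intro γ hγ
    have := hψ_uniq hγ (hWmem γ)
    rwa [hγ.2.1] at this
  -- common target set
  set T0 : Set G.unitSpace := ⋂ γ : α.isotropy z, (E' γ.val).target with hT0def
  have hT0open : IsOpen T0 := isOpen_iInter_of_finite fun γ => (E' γ.val).open_target
  have hT0mem : ∀ {γ}, γ ∈ α.isotropy z → ∀ {u : G.unitSpace}, u ∈ T0 →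
      u ∈ (E' γ).target := fun hγ u hu => Set.mem_iInter.mp hu ⟨_, hγ⟩
  have hxT0 : (⟨α.ρ z, hxU⟩ : G.unitSpace) ∈ T0 := by
    refine Set.mem_iInter.mpr fun γ => ?_
    have h1 := (hWrng γ.val γ.val (hWmem γ.val)).1
    have h2 : (⟨G.rng γ.val, G.src_rng γ.val⟩ : G.unitSpace) = ⟨α.ρ z, hxU⟩ :=
      Subtype.ext γ.2.2.1
    rwa [h2] at h1
  -- continuity of `ψ` in the first variable
  have hψc : ∀ {γ}, γ ∈ α.isotropy z →
      ContinuousOn (fun u : G.unitSpace => ψ u.val γ) (E' γ).target := by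
    intro γ hγ
    refine ((E' γ).continuousOn_symm).congr ?_
    intro u hu
    exact hψ_eq hγ u.2 hu
  have hsXc : Continuous (fun g : Arr => (⟨G.src g, G.src_src g⟩ : G.unitSpace)) :=
    G.continuous_src.subtype_mk _
  set g1 : Arr → G.unitSpace → G.unitSpace :=
    fun γ u => ⟨G.src (ψ u.val γ), G.src_src _⟩ with hg1def
  have hg1c : ∀ {γ}, γ ∈ α.isotropy z → ContinuousOn (g1 γ) (E' γ).target :=
    fun hγ => hsXc.comp_continuousOn (hψc hγ)
  have hg1x : ∀ {γ}, γ ∈ α.isotropy z → g1 γ ⟨α.ρ z, hxU⟩ = ⟨α.ρ z, hxU⟩ := by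
    intro γ hγ
    apply Subtype.ext
    show G.src (ψ (α.ρ z) γ) = α.ρ z
    rw [hψx hγ, hγ.1]
  -- continuity of multiplication of composable families
  have hmulC : ∀ (f h : G.unitSpace → Arr) (s : Set G.unitSpace), ContinuousOn f s →
      ContinuousOn h s → (∀ u ∈ s, G.src (f u) = G.rng (h u)) →
      ContinuousOn (fun u => G.mul (f u) (h u)) s := by
    intro f h s hf hh hc
    rw [continuousOn_iff_continuous_restrict] at hf hh ⊢
    exact G.continuous_mul.comp ((hf.prodMk hh).subtype_mk fun v => hc v.val v.2)
  -- shrinking the neighbourhood of `ρ z`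
  set O1 : Set G.unitSpace := (Subtype.val ⁻¹' (W (α.ρ z))) ∩ T0 with hO1def
  have hO1open : IsOpen O1 :=
    ((hWopen _).preimage continuous_subtype_val).inter hT0open
  have hxO1 : (⟨α.ρ z, hxU⟩ : G.unitSpace) ∈ O1 := ⟨hWmem _, hxT0⟩
  set O2 : Set G.unitSpace := O1 ∩ ⋂ γ : α.isotropy z, (T0 ∩ g1 γ.val ⁻¹' T0)
    with hO2def
  have hO2open : IsOpen O2 := hO1open.inter (isOpen_iInter_of_finite fun γ =>
    ((hg1c γ.2).mono fun u hu => hT0mem γ.2 hu).isOpen_inter_preimage hT0open hT0open)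
  have hxO2 : (⟨α.ρ z, hxU⟩ : G.unitSpace) ∈ O2 :=
    ⟨hxO1, Set.mem_iInter.mpr fun γ => ⟨hxT0, by
      simp only [Set.mem_preimage]; rw [hg1x γ.2]; exact hxT0⟩⟩
  have hO2T0 : O2 ⊆ T0 := fun u hu => hu.1.2
  have hO2g1 : ∀ {γ}, γ ∈ α.isotropy z → ∀ {u}, u ∈ O2 → g1 γ u ∈ T0 :=
    fun hγ u hu => (Set.mem_iInter.mp hu.2 ⟨_, hγ⟩).2
  have hcomp : ∀ {γ δ : Arr}, δ ∈ α.isotropy z → ∀ {u : G.unitSpace}, g1 γ u ∈ T0 →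
      G.src (ψ u.val γ) = G.rng (ψ (g1 γ u).val δ) := by
    intro γ δ hδ u hg
    have h2 := (hψ_mem hδ (g1 γ u).2 (hT0mem hδ hg)).2
    rw [h2]
  set mμ : Arr → Arr → G.unitSpace → Arr :=
    fun γ δ u => G.mul (ψ u.val γ) (ψ (g1 γ u).val δ) with hmμdef
  have hmμc : ∀ {γ δ}, γ ∈ α.isotropy z → δ ∈ α.isotropy z →
      ContinuousOn (mμ γ δ) O2 := by
    intro γ δ hγ hδ
    refine hmulC _ _ _ ((hψc hγ).mono fun u hu => hT0mem hγ (hO2T0 hu)) ?_ ?_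
    · exact ContinuousOn.comp (hψc hδ)
        ((hg1c hγ).mono fun u hu => hT0mem hγ (hO2T0 hu))
        (fun u hu => hT0mem hδ (hO2g1 hγ hu))
    · exact fun u hu => hcomp hδ (hO2g1 hγ hu)
  set U1 : Set G.unitSpace := O2 ∩ ⋂ p : (α.isotropy z) × (α.isotropy z),
      (O2 ∩ mμ p.1.val p.2.val ⁻¹' (W (G.mul p.1.val p.2.val))) with hU1def
  have hU1open : IsOpen U1 := hO2open.inter (isOpen_iInter_of_finite fun p =>
    (hmμc p.1.2 p.2.2).isOpen_inter_preimage hO2open (hWopen _))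
  have hxU1 : (⟨α.ρ z, hxU⟩ : G.unitSpace) ∈ U1 := by
    refine ⟨hxO2, Set.mem_iInter.mpr fun p => ⟨hxO2, ?_⟩⟩
    simp only [Set.mem_preimage, hmμdef]
    rw [hψx p.1.2, hg1x p.1.2, hψx p.2.2]
    exact hWmem _
  have hU1O2 : U1 ⊆ O2 := Set.inter_subset_left
  have hU1W : ∀ {γ δ}, γ ∈ α.isotropy z → δ ∈ α.isotropy z → ∀ {u}, u ∈ U1 →
      mμ γ δ u ∈ W (G.mul γ δ) :=
    fun hγ hδ u hu => (Set.mem_iInter.mp hu.2 (⟨_, hγ⟩, ⟨_, hδ⟩)).2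
  have hψmul : ∀ {γ δ}, γ ∈ α.isotropy z → δ ∈ α.isotropy z →
      ∀ {u : G.unitSpace}, u ∈ U1 →
      G.mul (ψ u.val γ) (ψ (g1 γ u).val δ) = ψ u.val (G.mul γ δ) := by
    intro γ δ hγ hδ u hu
    have hW' : mμ γ δ u ∈ W (G.mul γ δ) := hU1W hγ hδ hu
    have hrng : G.rng (mμ γ δ u) = u.val := by
      simp only [hmμdef]
      rw [G.rng_mul _ _ (hcomp hδ (hO2g1 hγ (hU1O2 hu)))]
      exact (hψ_mem hγ u.2 (hT0mem hγ (hO2T0 (hU1O2 hu)))).2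
    have huniq := hψ_uniq (α.mul_mem_isotropy z hγ hδ) hW'
    rw [hrng] at huniq
    have h2 : mμ γ δ u = G.mul (ψ u.val γ) (ψ (g1 γ u).val δ) := by simp only [hmμdef]
    rw [← h2]
    exact huniq.symm
  -- the invariant neighbourhood
  set UX : Set G.unitSpace := ⋂ γ : α.isotropy z, (U1 ∩ g1 γ.val ⁻¹' U1) with hUXdef
  have hUXopen : IsOpen UX := isOpen_iInter_of_finite fun γ =>
    ((hg1c γ.2).mono fun u hu => hT0mem γ.2 (hO2T0 (hU1O2 hu))).isOpen_inter_preimage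
      hU1open hU1open
  have hxUX : (⟨α.ρ z, hxU⟩ : G.unitSpace) ∈ UX :=
    Set.mem_iInter.mpr fun γ => ⟨hxU1, by
      simp only [Set.mem_preimage]; rw [hg1x γ.2]; exact hxU1⟩
  have hUXU1 : UX ⊆ U1 := fun u hu => (Set.mem_iInter.mp hu ⟨_, hxS⟩).1
  have hUXinv : ∀ {γ}, γ ∈ α.isotropy z → ∀ {u}, u ∈ UX → g1 γ u ∈ UX := by
    intro γ hγ u hu
    have hu1 : u ∈ U1 := hUXU1 hu
    refine Set.mem_iInter.mpr fun δ => ⟨(Set.mem_iInter.mp hu ⟨γ, hγ⟩).2, ?_⟩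
    show g1 δ.val (g1 γ u) ∈ U1
    have key : g1 δ.val (g1 γ u) = g1 (G.mul γ δ.val) u := by
      apply Subtype.ext
      show G.src (ψ (g1 γ u).val δ.val) = G.src (ψ u.val (G.mul γ δ.val))
      rw [← hψmul hγ δ.2 hu1]
      exact (G.src_mul _ _ (hcomp δ.2 (hO2g1 hγ (hU1O2 hu1)))).symm
    rw [key]
    exact (Set.mem_iInter.mp hu ⟨G.mul γ δ.val, α.mul_mem_isotropy z hγ δ.2⟩).2
  -- the neighbourhood `U` of `ρ z` in the unit space
  obtain ⟨VU, hVUopen, hVUeq⟩ := isOpen_induced_iff.mp hUXopen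
  set U : Set Arr := Subtype.val '' UX with hUdef
  have hUsub : U ⊆ G.unitSpace := by
    rintro u ⟨v, -, rfl⟩
    exact v.2
  have hUeq : U = VU ∩ G.unitSpace := by
    rw [hUdef, ← hVUeq, Subtype.image_preimage_coe, Set.inter_comm]
  have hxUmem : α.ρ z ∈ U := ⟨⟨α.ρ z, hxU⟩, hxUX, rfl⟩
  have hUmem : ∀ {u}, u ∈ U → ∃ hu : u ∈ G.unitSpace, (⟨u, hu⟩ : G.unitSpace) ∈ UX := by
    rintro u ⟨v, hv, rfl⟩
    exact ⟨v.2, hv⟩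
  -- basic membership facts for `U`
  have hUW : ∀ {u}, u ∈ U → u ∈ W (α.ρ z) := by
    intro u hU
    obtain ⟨hu, hv⟩ := hUmem hU
    exact (hU1O2 (hUXU1 hv)).1.1
  have hUT0 : ∀ {u} (hu : u ∈ G.unitSpace), (⟨u, hu⟩ : G.unitSpace) ∈ UX →
      (⟨u, hu⟩ : G.unitSpace) ∈ T0 :=
    fun hu hv => hO2T0 (hU1O2 (hUXU1 hv))
  -- `ψ` at the unit
  have hψ15 : ∀ u ∈ U, ψ u (α.ρ z) = u := by
    intro u hU
    obtain ⟨hu, hv⟩ := hUmem hU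
    have h := hψ_uniq hxS (hUW hU)
    rwa [G.rng_unit hu] at h
  -- the action `a` of the isotropy group on `U`
  set aF : Arr → Arr → Arr := fun γ u => G.src (ψ u (G.inv γ)) with haFdef
  have ha14 : ∀ γ u, aF (G.inv γ) u = G.src (ψ u γ) := by
    intro γ u
    show G.src (ψ u (G.inv (G.inv γ))) = _
    rw [G.inv_inv]
  have ha8 : ∀ γ ∈ α.isotropy z, ∀ u ∈ U, aF γ u ∈ U := by
    intro γ hγ u hU
    obtain ⟨hu, hv⟩ := hUmem hU
    exact ⟨g1 (G.inv γ) ⟨u, hu⟩, hUXinv (α.inv_mem_isotropy z hγ) hv, rfl⟩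
  have ha9 : ∀ u ∈ U, aF (α.ρ z) u = u := by
    intro u hU
    obtain ⟨hu, hv⟩ := hUmem hU
    show G.src (ψ u (G.inv (α.ρ z))) = u
    rw [G.inv_unit hxU, hψ15 u hU]
    exact hu
  have ha10 : ∀ γ δ, γ ∈ α.isotropy z → δ ∈ α.isotropy z → ∀ u ∈ U,
      aF (G.mul γ δ) u = aF γ (aF δ u) := by
    intro γ δ hγ hδ u hU
    obtain ⟨hu, hv⟩ := hUmem hU
    have hγ' := α.inv_mem_isotropy z hγ
    have hδ' := α.inv_mem_isotropy z hδ
    have hμ := hψmul hδ' hγ' (u := ⟨u, hu⟩) (hUXU1 hv)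
    have hsrc := G.src_mul _ _ (hcomp hγ' (hO2g1 hδ' (hU1O2 (hUXU1 hv))))
    calc aF (G.mul γ δ) u = G.src (ψ u (G.mul (G.inv δ) (G.inv γ))) := by
          show G.src (ψ u (G.inv (G.mul γ δ))) = _
          rw [G.inv_mul_rev (by rw [hγ.1, hδ.2.1])]
      _ = G.src (ψ (g1 (G.inv δ) ⟨u, hu⟩).val (G.inv γ)) := by rw [← hμ, hsrc]
      _ = aF γ (aF δ u) := rfl
  -- continuity of the slices of `ψ`
  have hincl : Continuous (fun u : U => (⟨u.val, hUsub u.2⟩ : G.unitSpace)) :=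
    continuous_subtype_val.subtype_mk _
  have hinclT0 : ∀ u : U, (⟨u.val, hUsub u.2⟩ : G.unitSpace) ∈ T0 := by
    intro u
    obtain ⟨hu, hv⟩ := hUmem u.2
    exact hUT0 hu hv
  have hsliceΨ : ∀ {γ}, γ ∈ α.isotropy z → Continuous (fun u : U => ψ u.val γ) :=
    fun hγ => (hψc hγ).comp_continuous hincl (fun u => hT0mem hγ (hinclT0 u))
  -- continuity of the action map
  have ha11 : Continuous (fun p : (α.isotropy z) × U => aF p.1.val p.2.val) := by
    rw [continuous_iff_continuousAt]
    rintro ⟨γ, u⟩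
    have hmemnh : {p : (α.isotropy z) × U | p.1 = γ} ∈ nhds (γ, u) := by
      have hopen : IsOpen {p : (α.isotropy z) × U | p.1 = γ} :=
        (isOpen_discrete {q : (α.isotropy z) | q = γ}).preimage continuous_fst
      exact hopen.mem_nhds rfl
    have hc : Continuous (fun p : (α.isotropy z) × U => aF γ.val p.2.val) :=
      (G.continuous_src.comp (hsliceΨ (α.inv_mem_isotropy z γ.2))).comp continuous_snd
    exact hc.continuousAt.congr
      (Filter.eventuallyEq_of_mem hmemnh fun p hp => by
        show aF γ.val p.2.val = aF p.1.val p.2.val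
        rw [show p.1 = γ from hp])
  -- the open embedding `Ψ`
  have hΨc : Continuous (fun p : U × (α.isotropy z) => ψ p.1.val p.2.val) := by
    rw [continuous_iff_continuousAt]
    rintro ⟨u, γ⟩
    have hmemnh : {p : U × (α.isotropy z) | p.2 = γ} ∈ nhds (u, γ) := by
      have hopen : IsOpen {p : U × (α.isotropy z) | p.2 = γ} :=
        (isOpen_discrete {q : (α.isotropy z) | q = γ}).preimage continuous_snd
      exact hopen.mem_nhds rfl
    exact (((hsliceΨ γ.2).comp continuous_fst).continuousAt).congr
      (Filter.eventuallyEq_of_mem hmemnh fun p hp => by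
        show ψ p.1.val γ.val = ψ p.1.val p.2.val
        rw [show p.2 = γ from hp])
  have hΨinj : Function.Injective (fun p : U × (α.isotropy z) => ψ p.1.val p.2.val) := by
    rintro ⟨u, γ⟩ ⟨v, δ⟩ heq
    simp only at heq
    obtain ⟨hu, hu'⟩ := hUmem u.2
    obtain ⟨hv, hv'⟩ := hUmem v.2
    have h1 := hψ_mem γ.2 hu (hT0mem γ.2 (hUT0 hu hu'))
    have h2 := hψ_mem δ.2 hv (hT0mem δ.2 (hUT0 hv hv'))
    have huv : u.val = v.val := by rw [← h1.2, ← h2.2, heq]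
    have hγδ : γ = δ := by
      by_contra hne
      have hne' : γ.val ≠ δ.val := fun h => hne (Subtype.ext h)
      exact Set.disjoint_left.mp (hWdisj _ γ.2 _ δ.2 hne') h1.1 (heq ▸ h2.1)
    exact Prod.ext (Subtype.ext huv) hγδ
  have hΨopen : IsOpenMap (fun p : U × (α.isotropy z) => ψ p.1.val p.2.val) := by
    intro O hO
    have himg : (fun p : U × (α.isotropy z) => ψ p.1.val p.2.val) '' O =
        ⋃ γ : (α.isotropy z), (fun u : U => ψ u.val γ.val) '' {u : U | (u, γ) ∈ O} := by
      ext w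
      constructor
      · rintro ⟨⟨u, γ⟩, hmem, rfl⟩
        exact Set.mem_iUnion.mpr ⟨γ, ⟨u, hmem, rfl⟩⟩
      · intro hw
        obtain ⟨γ, u, hmem, rfl⟩ := Set.mem_iUnion.mp hw
        exact ⟨(u, γ), hmem, rfl⟩
    rw [himg]
    refine isOpen_iUnion fun γ => ?_
    have hSOopen : IsOpen {u : U | (u, γ) ∈ O} :=
      hO.preimage (continuous_id.prodMk continuous_const)
    obtain ⟨V1, hV1open, hV1eq⟩ := isOpen_induced_iff.mp hSOopen
    have hQopen : IsOpen (Subtype.val ⁻¹' (V1 ∩ VU) : Set G.unitSpace) :=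
      (hV1open.inter hVUopen).preimage continuous_subtype_val
    have hQsub : (Subtype.val ⁻¹' (V1 ∩ VU) : Set G.unitSpace) ⊆ (E' γ.val).target := by
      intro v hv
      have hvU : v.val ∈ U := by rw [hUeq]; exact ⟨hv.2, v.2⟩
      obtain ⟨hu, hv'⟩ := hUmem hvU
      exact hT0mem γ.2 (hUT0 hu hv')
    have himg2 : (fun u : U => ψ u.val γ.val) '' {u : U | (u, γ) ∈ O} =
        (E' γ.val).symm '' (Subtype.val ⁻¹' (V1 ∩ VU) : Set G.unitSpace) := by
      ext w
      constructor
      · rintro ⟨u, hu0, rfl⟩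
        obtain ⟨hu, hu'⟩ := hUmem u.2
        refine ⟨⟨u.val, hu⟩, ⟨?_, ?_⟩, ?_⟩
        · have : u ∈ (Subtype.val ⁻¹' V1 : Set U) := hV1eq ▸ hu0
          exact this
        · have h' := hu'
          rw [← hVUeq] at h'
          exact h'
        · exact (hψ_eq γ.2 hu (hT0mem γ.2 (hUT0 hu hu'))).symm
      · rintro ⟨v, hvQ, rfl⟩
        have hvU : v.val ∈ U := by rw [hUeq]; exact ⟨hvQ.2, v.2⟩
        obtain ⟨hu, hv'⟩ := hUmem hvU
        refine ⟨⟨v.val, hvU⟩, ?_, ?_⟩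
        · show (⟨v.val, hvU⟩ : U) ∈ {u : U | (u, γ) ∈ O}
          rw [← hV1eq]
          exact hvQ.1
        · exact hψ_eq γ.2 v.2 (hQsub hvQ)
    rw [himg2]
    exact (E' γ.val).symm.isOpen_image_of_subset_source hQopen
      (by rw [OpenPartialHomeomorph.symm_source]; exact hQsub)
  -- the slice neighbourhood in `Z`, via properness
  have hslice : ∃ V : Set Z, IsOpen V ∧ z ∈ V ∧
      ∀ p : {p : Arr × Z // G.src p.1 = α.ρ p.2}, p.val.2 ∈ V →
        α.act p.val.1 p.val.2 ∈ V → p.val.1 ∈ ⋃ γ : (α.isotropy z), W γ.val := by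
    by_contra hcon
    push_neg at hcon
    set C : Set {p : Arr × Z // G.src p.1 = α.ρ p.2} :=
      {p | p.val.1 ∈ (⋃ γ : (α.isotropy z), W γ.val)ᶜ} with hCdef
    set anchor : {p : Arr × Z // G.src p.1 = α.ρ p.2} → Z × Z :=
      fun p => (α.act p.val.1 p.val.2, p.val.2) with hanchor
    set F := Filter.comap anchor (nhds (z, z)) ⊓ Filter.principal C with hFdef
    have hFne : F.NeBot := by
      rw [hFdef, Filter.inf_principal_neBot_iff]
      intro t ht
      obtain ⟨t', ht', hsubt⟩ := Filter.mem_comap.mp ht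
      rw [nhds_prod_eq] at ht'
      obtain ⟨t1, ht1, t2, ht2, hsub2⟩ := Filter.mem_prod_iff.mp ht'
      obtain ⟨V1, hV1sub, hV1o, hzV1⟩ := mem_nhds_iff.mp ht1
      obtain ⟨V2, hV2sub, hV2o, hzV2⟩ := mem_nhds_iff.mp ht2
      obtain ⟨p, hp2, hpact, hp1⟩ := hcon (V1 ∩ V2) (hV1o.inter hV2o) ⟨hzV1, hzV2⟩
      refine ⟨p, hsubt (hsub2 ⟨hV1sub hpact.1, hV2sub hp2.2⟩), hp1⟩
    have hle : Filter.map anchor F ≤ nhds (z, z) :=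
      le_trans (Filter.map_mono inf_le_left) Filter.map_comap_le
    have hcluster : MapClusterPt (z, z) F anchor :=
      mapClusterPt_def.mpr (ClusterPt.of_le_nhds hle)
    obtain ⟨p, hpz, hpF⟩ := hProper.clusterPt_of_mapClusterPt hcluster
    have hCclosed : IsClosed C := by
      have hcl : IsClosed ((⋃ γ : (α.isotropy z), W γ.val)ᶜ) :=
        (isOpen_iUnion fun γ : (α.isotropy z) => hWopen γ.val).isClosed_compl
      exact hcl.preimage (continuous_fst.comp continuous_subtype_val)
    have hpC : p ∈ C := by
      have h1 : ClusterPt p (Filter.principal C) := hpF.mono inf_le_right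
      have h2 : p ∈ closure C := mem_closure_iff_clusterPt.mpr h1
      rwa [hCclosed.closure_eq] at h2
    have hz1 : α.act p.val.1 p.val.2 = z := congrArg Prod.fst hpz
    have hz2 : p.val.2 = z := congrArg Prod.snd hpz
    have hsrcp : G.src p.val.1 = α.ρ z := by rw [← hz2]; exact p.2
    have hactp : α.act p.val.1 z = z := by
      conv_lhs => rw [← hz2]
      exact hz1
    have hrngp : G.rng p.val.1 = α.ρ z := by
      have := α.ρ_act p.val.1 z hsrcp
      rw [hactp] at this
      exact this.symm
    exact hpC (Set.mem_iUnion.mpr ⟨⟨p.val.1, hsrcp, hrngp, hactp⟩, hWmem _⟩)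
  obtain ⟨V, hVopen, hzV, hVprop⟩ := hslice
  -- assembling everything
  refine ⟨V ∩ α.ρ ⁻¹' VU, U, aF, ψ, hVopen.inter (hVUopen.preimage α.continuous_ρ),
    ⟨hzV, ?_⟩, hUsub, ⟨VU, hVUopen, hUeq⟩, hxUmem, ?_, hSfin, ha8, ha9, ha10, ha11,
    ?_, ?_, ?_, hψ15, ?_, ?_⟩
  · show α.ρ z ∈ VU
    have hm := hxUmem
    rw [hUeq] at hm
    exact hm.1
  · rintro _ ⟨z', hz', rfl⟩
    rw [hUeq]
    exact ⟨hz'.2, α.ρ_unit z'⟩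
  · exact Topology.IsOpenEmbedding.of_continuous_injective_isOpenMap hΨc hΨinj hΨopen
  · intro u hU γ hγ
    obtain ⟨hu, hv⟩ := hUmem hU
    exact (hψ_mem hγ hu (hT0mem hγ (hUT0 hu hv))).2
  · intro u hU γ hγ
    exact (ha14 γ u).symm
  · intro u hU γ δ hγ hδ
    obtain ⟨hu, hv⟩ := hUmem hU
    have h14 := ha14 γ u
    rw [h14]
    exact hψmul hγ hδ (u := ⟨u, hu⟩) (hUXU1 hv)
  · intro g z' hsrcg hz' hact
    have hgW := hVprop ⟨(g, z'), hsrcg⟩ hz'.1 hact.1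
    obtain ⟨γ, hγW⟩ := Set.mem_iUnion.mp hgW
    have hu : G.rng g ∈ U := by
      rw [hUeq]
      refine ⟨?_, G.src_rng g⟩
      have hρ := α.ρ_act g z' hsrcg
      rw [← hρ]
      exact hact.2
    exact ⟨G.rng g, γ.val, hu, γ.2, (hψ_uniq γ.2 hγW).symm⟩
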